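/- arXiv:2003.02652 — 3 statements merged into one kernel-verified Lean document; each statement's English description precedes it below -/
import Mathlib

section
/- Let A, B, C, D be four points in the Euclidean plane, no three of which are collinear, such that all six pairwise distances are positive integers. Then every one of these distances is strictly greater than 1. -/
open RealInnerProductSpace

private abbrev E2 := EuclideanSpace ℝ (Fin 2)

private lemma int_aux (m : ℤ) (a : ℕ) (h : m * m = 4 * (a:ℤ)^2 - 1) : False := by
  have h4 : ∀ x y : ZMod 4, x * x ≠ 4 * y^2 - 1 := by decide
  have := congrArg (fun z : ℤ => (z : ZMod 4)) h
  push_cast at this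
  exact h4 _ _ this

private lemma rat_aux (r : ℚ) (a : ℕ) (h : r^2 = 4*(a:ℚ)^2 - 1) : False := by
  have h' : r * r = ((4*(a:ℤ)^2 - 1 : ℤ) : ℚ) := by push_cast; rw [← sq]; linarith
  have hden : r.den * r.den = 1 := by
    have hd := Rat.mul_self_den r
    rw [h'] at hd
    rw [Rat.den_intCast] at hd; omega
  have hd1 : r.den = 1 := Nat.eq_one_of_mul_eq_one_right hden
  have hr : (r.num : ℚ) = r := by
    conv_rhs => rw [← Rat.num_div_den r]
    rw [hd1]; simp
  rw [← hr] at h'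
  have : r.num * r.num = 4*(a:ℤ)^2 - 1 := by exact_mod_cast h'
  exact int_aux r.num a this

private lemma dep2 (q u v : E2) (hq : q ≠ 0) (hu : u ≠ 0)
    (huq : ⟪u, q⟫ = 0) (hvq : ⟪v, q⟫ = 0) : ∃ t : ℝ, v = t • u := by
  have hW : Module.finrank ℝ ((ℝ ∙ q)ᗮ) = 1 := by
    have h1 : Module.finrank ℝ (ℝ ∙ q) = 1 := finrank_span_singleton hq
    have h2 := Submodule.finrank_add_finrank_orthogonal (K := (ℝ ∙ q))
    rw [finrank_euclideanSpace_fin, h1] at h2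
    omega
  have huW : u ∈ (ℝ ∙ q)ᗮ := Submodule.mem_orthogonal_singleton_iff_inner_left.mpr huq
  have hvW : v ∈ (ℝ ∙ q)ᗮ := Submodule.mem_orthogonal_singleton_iff_inner_left.mpr hvq
  have hspan : (ℝ ∙ u) = (ℝ ∙ q)ᗮ := by
    apply Submodule.eq_of_le_of_finrank_eq
    · rw [Submodule.span_le]; simpa using huW
    · rw [hW, finrank_span_singleton hu]
  obtain ⟨t, ht⟩ := Submodule.mem_span_singleton.mp (hspan ▸ hvW)
  exact ⟨t, ht.symm⟩

private lemma dist_eq_of_unit (P Q R : E2) (h : ¬ Collinear ℝ ({P, Q, R} : Set E2))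
    (h1 : dist P Q = 1) (a a' : ℕ) (ha : dist P R = a) (ha' : dist Q R = a') : a = a' := by
  by_contra hne
  have t1 : dist P R ≤ dist P Q + dist Q R := dist_triangle P Q R
  have t2 : dist Q R ≤ dist Q P + dist P R := dist_triangle Q P R
  rw [dist_comm Q P] at t2
  have hn1 : (a : ℝ) ≤ 1 + a' := by rw [← ha, ← ha', ← h1]; exact t1
  have hn2 : (a' : ℝ) ≤ 1 + a := by rw [← ha, ← ha', ← h1]; exact t2
  have hn1' : a ≤ 1 + a' := by exact_mod_cast hn1
  have hn2' : a' ≤ 1 + a := by exact_mod_cast hn2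
  have : a = a' + 1 ∨ a' = a + 1 := by omega
  rcases this with h2 | h2
  · have he : dist P Q + dist Q R = dist P R := by
      rw [h1, ha, ha', h2]; push_cast; ring
    exact h (dist_add_dist_eq_iff.mp he).collinear
  · have he : dist Q P + dist P R = dist Q R := by
      rw [dist_comm Q P, h1, ha, ha', h2]; push_cast; ring
    have hc := (dist_add_dist_eq_iff.mp he).collinear
    apply h
    rwa [Set.insert_comm] at hc


private lemma real_aux (a b c : ℕ) (ha1 : (1:ℝ) ≤ a) (hc1 : (1:ℝ) ≤ c) (y z : ℝ)
    (hy2 : y^2 = (a:ℝ)^2 - 1/4) (hz2 : z^2 = (b:ℝ)^2 - 1/4)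
    (hyz : (y - z)^2 = (c:ℝ)^2) : False := by
  have hcne : (c:ℝ) ≠ 0 := by linarith
  have hkey : ∀ ρ : ℚ, (ρ:ℝ) = 2 * y → False := by
    intro ρ hρ
    apply rat_aux ρ a
    have hcast : ((ρ^2 : ℚ) : ℝ) = ((4*(a:ℚ)^2 - 1 : ℚ) : ℝ) := by
      push_cast
      rw [hρ]
      nlinarith
    exact_mod_cast hcast
  have hfac : (y - z - c) * (y - z + c) = 0 := by nlinarith
  have hd : ((a:ℝ)^2 - (b:ℝ)^2)/(c:ℝ) = y + z ∨ ((a:ℝ)^2 - (b:ℝ)^2)/(c:ℝ) = -(y + z) := by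
    rcases mul_eq_zero.mp hfac with h0 | h0
    · left; rw [div_eq_iff hcne]; nlinarith
    · right; rw [div_eq_iff hcne]; nlinarith
  have hcpos : (0:ℝ) < c := by linarith
  have h1 : (y - z) * (y + z) = (a:ℝ)^2 - (b:ℝ)^2 := by nlinarith
  rcases mul_eq_zero.mp hfac with h0 | h0
  · have hyzc : y - z = c := by linarith
    apply hkey ((c:ℚ) + ((a:ℚ)^2 - (b:ℚ)^2)/(c:ℚ))
    push_cast
    rw [hyzc] at h1
    rcases hd with hd | hd
    · rw [hd]; linarith
    · rw [hd]
      rw [div_eq_iff hcne] at hd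
      have h5 : (c:ℝ) * (y + z) = 0 := by linarith
      have h4 : y + z = 0 := by
        rcases mul_eq_zero.mp h5 with h | h
        · exact absurd h hcne
        · exact h
      linarith
  · have hyzc : y - z = -c := by linarith
    apply hkey (-((c:ℚ) + ((a:ℚ)^2 - (b:ℚ)^2)/(c:ℚ)))
    push_cast
    rw [hyzc] at h1
    rcases hd with hd | hd
    · rw [hd]
      rw [div_eq_iff hcne] at hd
      have h5 : (c:ℝ) * (y + z) = 0 := by linarith
      have h4 : y + z = 0 := by
        rcases mul_eq_zero.mp h5 with h | h
        · exact absurd h hcne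
        · exact h
      linarith
    · rw [hd]; linarith

private lemma key (P Q R S : E2) (a b c : ℕ) (ha0 : 0 < a) (hc0 : 0 < c)
    (hPQ : dist P Q = 1)
    (hPR : dist P R = a) (hQR : dist Q R = a)
    (hPS : dist P S = b) (hQS : dist Q S = b)
    (hRS : dist R S = c) : False := by
  have ha1 : (1:ℝ) ≤ a := by exact_mod_cast ha0
  have hc1 : (1:ℝ) ≤ c := by exact_mod_cast hc0
  obtain ⟨q, hqdef⟩ : ∃ q : E2, q = Q - P := ⟨_, rfl⟩
  obtain ⟨r, hrdef⟩ : ∃ r : E2, r = R - P := ⟨_, rfl⟩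
  obtain ⟨s, hsdef⟩ : ∃ s : E2, s = S - P := ⟨_, rfl⟩
  have hq : ‖q‖ = 1 := by rw [hqdef, ← dist_eq_norm, dist_comm]; exact hPQ
  have hr : ‖r‖ = a := by rw [hrdef, ← dist_eq_norm, dist_comm]; exact hPR
  have hs : ‖s‖ = b := by rw [hsdef, ← dist_eq_norm, dist_comm]; exact hPS
  have hrq : ‖r - q‖ = a := by
    have e : r - q = R - Q := by rw [hrdef, hqdef]; abel
    rw [e, ← dist_eq_norm, dist_comm]; exact hQR
  have hsq : ‖s - q‖ = b := by
    have e : s - q = S - Q := by rw [hsdef, hqdef]; abel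
    rw [e, ← dist_eq_norm, dist_comm]; exact hQS
  have hrs : ‖r - s‖ = c := by
    have e : r - s = R - S := by rw [hrdef, hsdef]; abel
    rw [e, ← dist_eq_norm]; exact hRS
  clear hqdef hrdef hsdef hPQ hPR hQR hPS hQS hRS
  have hirq : ⟪r, q⟫ = 1/2 := by
    have h0 := norm_sub_sq_real r q
    rw [hrq, hr, hq] at h0
    nlinarith [h0]
  have hisq : ⟪s, q⟫ = 1/2 := by
    have h0 := norm_sub_sq_real s q
    rw [hsq, hs, hq] at h0
    nlinarith [h0]
  obtain ⟨u, hudef⟩ : ∃ u : E2, u = r - (2⁻¹:ℝ) • q := ⟨_, rfl⟩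
  obtain ⟨v, hvdef⟩ : ∃ v : E2, v = s - (2⁻¹:ℝ) • q := ⟨_, rfl⟩
  have hqq : ⟪q, q⟫ = 1 := by
    rw [real_inner_self_eq_norm_sq, hq]; norm_num
  have huq : ⟪u, q⟫ = 0 := by
    rw [hudef, inner_sub_left, real_inner_smul_left, hqq, hirq]; norm_num
  have hvq : ⟪v, q⟫ = 0 := by
    rw [hvdef, inner_sub_left, real_inner_smul_left, hqq, hisq]; norm_num
  have hn2 : ‖(2⁻¹:ℝ)‖ = 2⁻¹ := by
    rw [Real.norm_eq_abs]; norm_num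
  have hu2 : ‖u‖^2 = (a:ℝ)^2 - 1/4 := by
    have h0 := norm_sub_sq_real r ((2⁻¹:ℝ) • q)
    rw [real_inner_smul_right, hirq, norm_smul, hq, hr, hn2] at h0
    rw [hudef, h0]
    ring
  have hv2 : ‖v‖^2 = (b:ℝ)^2 - 1/4 := by
    have h0 := norm_sub_sq_real s ((2⁻¹:ℝ) • q)
    rw [real_inner_smul_right, hisq, norm_smul, hq, hs, hn2] at h0
    rw [hvdef, h0]
    ring
  have huv : ‖u - v‖ = c := by
    have e : u - v = r - s := by rw [hudef, hvdef]; abel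
    rw [e, hrs]
  have hqne : q ≠ 0 := by
    intro h0; rw [h0, norm_zero] at hq; norm_num at hq
  have hune : u ≠ 0 := by
    intro h0
    rw [h0, norm_zero] at hu2
    nlinarith [hu2, ha1]
  obtain ⟨t, ht⟩ := dep2 q u v hqne hune huq hvq
  apply real_aux a b c ha1 hc1 ‖u‖ (t * ‖u‖) hu2 _ _
  · rw [← hv2, ht, norm_smul, Real.norm_eq_abs, mul_pow, mul_pow, sq_abs]
  · have e : u - v = (1 - t) • u := by rw [ht, sub_smul, one_smul]
    have h0 : ‖u - v‖^2 = (1-t)^2 * ‖u‖^2 := by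
      rw [e, norm_smul, Real.norm_eq_abs, mul_pow, sq_abs]
    rw [huv] at h0
    rw [h0]; ring

private lemma ncol_perm {x y z x' y' z' : E2} (h : ({x, y, z} : Set E2) = {x', y', z'})
    (h' : ¬ Collinear ℝ ({x', y', z'} : Set E2)) : ¬ Collinear ℝ ({x, y, z} : Set E2) := by
  rw [h]; exact h'

set_option maxHeartbeats 1000000 in
theorem stmt_3 (A B C D : EuclideanSpace ℝ (Fin 2))
    (hABC : ¬ Collinear ℝ ({A, B, C} : Set (EuclideanSpace ℝ (Fin 2))))
    (hABD : ¬ Collinear ℝ ({A, B, D} : Set (EuclideanSpace ℝ (Fin 2))))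
    (hACD : ¬ Collinear ℝ ({A, C, D} : Set (EuclideanSpace ℝ (Fin 2))))
    (hBCD : ¬ Collinear ℝ ({B, C, D} : Set (EuclideanSpace ℝ (Fin 2))))
    (hint : ∀ P ∈ ({A, B, C, D} : Set (EuclideanSpace ℝ (Fin 2))),
      ∀ Q ∈ ({A, B, C, D} : Set (EuclideanSpace ℝ (Fin 2))),
        P ≠ Q → ∃ n : ℕ, 0 < n ∧ dist P Q = n) :
    ∀ P ∈ ({A, B, C, D} : Set (EuclideanSpace ℝ (Fin 2))),
      ∀ Q ∈ ({A, B, C, D} : Set (EuclideanSpace ℝ (Fin 2))),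
        P ≠ Q → 1 < dist P Q := by
  -- distinctness
  have hAB : A ≠ B := by
    rintro rfl
    exact hABC ((collinear_pair ℝ A C).subset (by intro x hx; simp at hx ⊢; tauto))
  have hAC : A ≠ C := by
    rintro rfl
    exact hABC ((collinear_pair ℝ A B).subset (by intro x hx; simp at hx ⊢; tauto))
  have hBC : B ≠ C := by
    rintro rfl
    exact hABC ((collinear_pair ℝ A B).subset (by intro x hx; simp at hx ⊢; tauto))
  have hAD : A ≠ D := by
    rintro rfl
    exact hABD ((collinear_pair ℝ A B).subset (by intro x hx; simp at hx ⊢; tauto))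
  have hBD : B ≠ D := by
    rintro rfl
    exact hABD ((collinear_pair ℝ A B).subset (by intro x hx; simp at hx ⊢; tauto))
  have hCD : C ≠ D := by
    rintro rfl
    exact hACD ((collinear_pair ℝ A C).subset (by intro x hx; simp at hx ⊢; tauto))
  -- distances
  obtain ⟨nAB, hnAB0, hnAB⟩ := hint A (by simp) B (by simp) hAB
  obtain ⟨nAC, hnAC0, hnAC⟩ := hint A (by simp) C (by simp) hAC
  obtain ⟨nAD, hnAD0, hnAD⟩ := hint A (by simp) D (by simp) hAD
  obtain ⟨nBC, hnBC0, hnBC⟩ := hint B (by simp) C (by simp) hBC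
  obtain ⟨nBD, hnBD0, hnBD⟩ := hint B (by simp) D (by simp) hBD
  obtain ⟨nCD, hnCD0, hnCD⟩ := hint C (by simp) D (by simp) hCD
  -- permuted non-collinearity
  have hACB : ¬ Collinear ℝ ({A, C, B} : Set E2) := ncol_perm (by ext p; simp; tauto) hABC
  have hBCA : ¬ Collinear ℝ ({B, C, A} : Set E2) := ncol_perm (by ext p; simp; tauto) hABC
  have hADB : ¬ Collinear ℝ ({A, D, B} : Set E2) := ncol_perm (by ext p; simp; tauto) hABD
  have hBDA : ¬ Collinear ℝ ({B, D, A} : Set E2) := ncol_perm (by ext p; simp; tauto) hABD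
  have hADC : ¬ Collinear ℝ ({A, D, C} : Set E2) := ncol_perm (by ext p; simp; tauto) hACD
  have hCDA : ¬ Collinear ℝ ({C, D, A} : Set E2) := ncol_perm (by ext p; simp; tauto) hACD
  have hBDC : ¬ Collinear ℝ ({B, D, C} : Set E2) := ncol_perm (by ext p; simp; tauto) hBCD
  have hCDB : ¬ Collinear ℝ ({C, D, B} : Set E2) := ncol_perm (by ext p; simp; tauto) hBCD
  -- dist comm forms
  have hnBA : dist B A = nAB := by rw [dist_comm]; exact hnAB
  have hnCA : dist C A = nAC := by rw [dist_comm]; exact hnAC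
  have hnDA : dist D A = nAD := by rw [dist_comm]; exact hnAD
  have hnCB : dist C B = nBC := by rw [dist_comm]; exact hnBC
  have hnDB : dist D B = nBD := by rw [dist_comm]; exact hnBD
  have hnDC : dist D C = nCD := by rw [dist_comm]; exact hnCD
  -- each distance is not 1
  have keyAB : dist A B ≠ 1 := by
    intro h1
    have e1 := dist_eq_of_unit A B C hABC h1 nAC nBC hnAC hnBC
    have e2 := dist_eq_of_unit A B D hABD h1 nAD nBD hnAD hnBD
    exact key A B C D nAC nAD nCD hnAC0 hnCD0 h1 hnAC (by rw [hnBC, e1]) hnAD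
      (by rw [hnBD, e2]) hnCD
  have keyAC : dist A C ≠ 1 := by
    intro h1
    have e1 := dist_eq_of_unit A C B hACB h1 nAB nBC hnAB hnCB
    have e2 := dist_eq_of_unit A C D hACD h1 nAD nCD hnAD hnCD
    exact key A C B D nAB nAD nBD hnAB0 hnBD0 h1 hnAB (by rw [hnCB, ← e1]) hnAD
      (by rw [hnCD, ← e2]) hnBD
  have keyAD : dist A D ≠ 1 := by
    intro h1
    have e1 := dist_eq_of_unit A D B hADB h1 nAB nBD hnAB hnDB
    have e2 := dist_eq_of_unit A D C hADC h1 nAC nCD hnAC hnDC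
    exact key A D B C nAB nAC nBC hnAB0 hnBC0 h1 hnAB (by rw [hnDB, ← e1]) hnAC
      (by rw [hnDC, ← e2]) hnBC
  have keyBC : dist B C ≠ 1 := by
    intro h1
    have e1 := dist_eq_of_unit B C A hBCA h1 nAB nAC hnBA hnCA
    have e2 := dist_eq_of_unit B C D hBCD h1 nBD nCD hnBD hnCD
    exact key B C A D nAB nBD nAD hnAB0 hnAD0 h1 hnBA (by rw [hnCA, ← e1]) hnBD
      (by rw [hnCD, ← e2]) hnAD
  have keyBD : dist B D ≠ 1 := by
    intro h1
    have e1 := dist_eq_of_unit B D A hBDA h1 nAB nAD hnBA hnDA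
    have e2 := dist_eq_of_unit B D C hBDC h1 nBC nCD hnBC hnDC
    exact key B D A C nAB nBC nAC hnAB0 hnAC0 h1 hnBA (by rw [hnDA, ← e1]) hnBC
      (by rw [hnDC, ← e2]) hnAC
  have keyCD : dist C D ≠ 1 := by
    intro h1
    have e1 := dist_eq_of_unit C D A hCDA h1 nAC nAD hnCA hnDA
    have e2 := dist_eq_of_unit C D B hCDB h1 nBC nBD hnCB hnDB
    exact key C D A B nAC nBC nAB hnAC0 hnAB0 h1 hnCA (by rw [hnDA, ← e1]) hnCB
      (by rw [hnDB, ← e2]) hnAB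
  -- conclude
  have big : ∀ (X Y : E2) (n : ℕ), 0 < n → dist X Y = n → dist X Y ≠ 1 → 1 < dist X Y := by
    intro X Y n hn0 hXY hne1
    rw [hXY]
    rw [hXY] at hne1
    have : n ≠ 1 := by
      intro h; apply hne1; rw [h]; norm_num
    have h2 : 2 ≤ n := by omega
    have : (2:ℝ) ≤ n := by exact_mod_cast h2
    linarith
  have gAB : 1 < dist A B := big A B nAB hnAB0 hnAB keyAB
  have gAC : 1 < dist A C := big A C nAC hnAC0 hnAC keyAC
  have gAD : 1 < dist A D := big A D nAD hnAD0 hnAD keyAD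
  have gBC : 1 < dist B C := big B C nBC hnBC0 hnBC keyBC
  have gBD : 1 < dist B D := big B D nBD hnBD0 hnBD keyBD
  have gCD : 1 < dist C D := big C D nCD hnCD0 hnCD keyCD
  have gBA : 1 < dist B A := by rwa [dist_comm]
  have gCA : 1 < dist C A := by rwa [dist_comm]
  have gDA : 1 < dist D A := by rwa [dist_comm]
  have gCB : 1 < dist C B := by rwa [dist_comm]
  have gDB : 1 < dist D B := by rwa [dist_comm]
  have gDC : 1 < dist D C := by rwa [dist_comm]
  intro P hP Q hQ hne
  simp only [Set.mem_insert_iff, Set.mem_singleton_iff] at hP hQ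
  rcases hP with rfl | rfl | rfl | rfl <;> rcases hQ with rfl | rfl | rfl | rfl <;>
    first
      | exact absurd rfl hne
      | assumption
end

section
/- There exist infinitely many pairs (b, c) of positive integers satisfying b(b+1) = 3c². In particular (3, 2), (48, 28) and (675, 390) are solutions. -/
private def pellSeq : ℕ → ℕ × ℕ
  | 0 => (3, 2)
  | n + 1 =>
    let p := pellSeq n
    (7 * p.1 + 12 * p.2 + 3, 4 * p.1 + 7 * p.2 + 2)

private lemma pellSeq_mem (n : ℕ) :
    0 < (pellSeq n).1 ∧ 0 < (pellSeq n).2 ∧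
      (pellSeq n).1 * ((pellSeq n).1 + 1) = 3 * (pellSeq n).2 ^ 2 := by
  induction n with
  | zero => exact ⟨by norm_num [pellSeq], by norm_num [pellSeq], by norm_num [pellSeq]⟩
  | succ n ih =>
    obtain ⟨hb, hc, h⟩ := ih
    refine ⟨by simp only [pellSeq]; omega, by simp only [pellSeq]; omega, ?_⟩
    simp only [pellSeq]
    nlinarith [h]

private lemma pellSeq_fst_strictMono : StrictMono (fun n => (pellSeq n).1) := by
  apply strictMono_nat_of_lt_succ
  intro n
  have := (pellSeq_mem n).1
  simp only [pellSeq]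
  omega

theorem stmt_7 :
    {p : ℕ × ℕ | 0 < p.1 ∧ 0 < p.2 ∧ p.1 * (p.1 + 1) = 3 * p.2 ^ 2}.Infinite ∧
    (3, 2) ∈ {p : ℕ × ℕ | 0 < p.1 ∧ 0 < p.2 ∧ p.1 * (p.1 + 1) = 3 * p.2 ^ 2} ∧
    (48, 28) ∈ {p : ℕ × ℕ | 0 < p.1 ∧ 0 < p.2 ∧ p.1 * (p.1 + 1) = 3 * p.2 ^ 2} ∧
    (675, 390) ∈ {p : ℕ × ℕ | 0 < p.1 ∧ 0 < p.2 ∧ p.1 * (p.1 + 1) = 3 * p.2 ^ 2} := by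
  refine ⟨?_, ⟨by norm_num, by norm_num, by norm_num⟩,
    ⟨by norm_num, by norm_num, by norm_num⟩, ⟨by norm_num, by norm_num, by norm_num⟩⟩
  apply Set.infinite_of_injective_forall_mem (f := pellSeq)
    (hi := fun m n h => pellSeq_fst_strictMono.injective (by rw [h]))
  exact pellSeq_mem
end

section
/- There are no positive integers a and c such that 4c⁴ − (20a² − 9)c² + 16a⁴ = 0. -/
theorem stmt_10 : ¬ ∃ a c : ℤ, 0 < a ∧ 0 < c ∧
    4 * c ^ 4 - (20 * a ^ 2 - 9) * c ^ 2 + 16 * a ^ 4 = 0 := by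
  rintro ⟨a, c, ha, hc, h⟩
  have hk2 : (8*c^2 - 20*a^2 + 9)^2 = 9 * ((4*a^2-1)*(4*a^2-9)) := by
    linear_combination 16 * h
  have h3 : (3:ℤ) ∣ (8*c^2 - 20*a^2 + 9) := by
    have hd : (3:ℤ) ∣ (8*c^2 - 20*a^2 + 9)^2 :=
      ⟨3*((4*a^2-1)*(4*a^2-9)), by linarith⟩
    exact Int.Prime.dvd_pow' (by norm_num) hd
  obtain ⟨m, hm⟩ := h3
  have hm2 : (4*a^2-1)*(4*a^2-9) = m^2 := by nlinarith [hk2, hm]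
  have hco : IsCoprime ((4*a^2-1 : ℤ)) ((4*a^2-9 : ℤ)) :=
    ⟨(4*a^2-1)-(2*a^4-a^2), 2*a^4-a^2, by ring⟩
  obtain ⟨s, hs | hs⟩ := Int.sq_of_isCoprime hco hm2
  · -- 4a²-1 = s², impossible mod 4
    rcases Int.even_or_odd s with ⟨q, hq⟩ | ⟨q, hq⟩ <;> subst hq
    · have h1 : 4*q^2 = 4*a^2 - 1 := by linear_combination -hs
      omega
    · have h1 : 4*(q^2+q) + 2 = 4*a^2 := by linear_combination -hs
      omega
  · -- 4a²-1 = -s², impossible since 4a²-1 ≥ 3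
    nlinarith [sq_nonneg s, sq_nonneg a, ha]
end
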